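/- Let Q, V : S → ℝ (S a set of augmented states) and for h > 0 define Q_h(s) = max( c(s), γ^h V(Φ_h(s)) ) where c : S → ℝ is continuous at s₀, γ ∈ (0,1], and h ↦ γ^h V(Φ_h(s₀)) is differentiable at h = 0 with value V(s₀) and derivative D. Then if c(s₀) - V(s₀) < 0, lim_{h → 0⁺} ( Q_h(s₀) - V(s₀) ) / h exists and equals D, and if c(s₀) - V(s₀) > 0, then (Q_h(s₀) - V(s₀))/h → +∞ as h → 0⁺. -/
import Mathlib


open Filter

/-- Epigraph-based advantage limit: with `Q_h(s₀) = max (c s₀) (γ^h V(Φ_h s₀))` and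
`h ↦ γ^h V(Φ_h s₀)` differentiable at `0` with value `V s₀` and derivative `D`,
the limit of `(Q_h(s₀) - V s₀)/h` as `h → 0⁺` is `D` when `c s₀ < V s₀`, and
`+∞` when `c s₀ > V s₀`. -/
theorem epigraph_advantage_limit {S : Type*} [TopologicalSpace S]
    (γ : ℝ) (hγ : γ ∈ Set.Ioc (0 : ℝ) 1)
    (c V : S → ℝ) (Φ : ℝ → S → S) (s₀ : S) (D : ℝ)
    (hc : ContinuousAt c s₀) (hΦ0 : Φ 0 s₀ = s₀)
    (hD : HasDerivAt (fun h => γ ^ h * V (Φ h s₀)) D 0) :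
    (c s₀ - V s₀ < 0 →
      Tendsto (fun h => (max (c s₀) (γ ^ h * V (Φ h s₀)) - V s₀) / h)
        (nhdsWithin 0 (Set.Ioi 0)) (nhds D)) ∧
    (0 < c s₀ - V s₀ →
      Tendsto (fun h => (max (c s₀) (γ ^ h * V (Φ h s₀)) - V s₀) / h)
        (nhdsWithin 0 (Set.Ioi 0)) atTop) := by
  set g : ℝ → ℝ := fun h => γ ^ h * V (Φ h s₀) with hg
  have hg0 : g 0 = V s₀ := by simp [hg, hΦ0]
  constructor
  · intro hlt
    have hcont : ContinuousAt g 0 := hD.continuousAt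
    have hev : ∀ᶠ h in nhdsWithin 0 (Set.Ioi 0), c s₀ < g h := by
      have : ∀ᶠ h in nhds (0:ℝ), c s₀ < g h :=
        continuousAt_const.eventually_lt hcont (by rw [hg0]; linarith)
      exact this.filter_mono nhdsWithin_le_nhds
    have hslope : Tendsto (fun h => (g h - V s₀) / h)
        (nhdsWithin 0 (Set.Ioi 0)) (nhds D) := by
      have := hasDerivAt_iff_tendsto_slope.mp hD
      have h2 : Tendsto (slope g 0) (nhdsWithin 0 (Set.Ioi 0)) (nhds D) :=
        this.mono_left (nhdsWithin_mono _ (fun x hx => ne_of_gt hx))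
      refine h2.congr' ?_
      filter_upwards [self_mem_nhdsWithin] with h hh
      simp [slope_def_field, div_eq_inv_mul, hg0]
    refine hslope.congr' ?_
    filter_upwards [hev] with h hh
    rw [max_eq_right hh.le]
  · intro hgt
    have h1 : Tendsto (fun h : ℝ => (c s₀ - V s₀) / h)
        (nhdsWithin 0 (Set.Ioi 0)) atTop := by
      simp only [div_eq_mul_inv]
      exact Tendsto.const_mul_atTop hgt tendsto_inv_nhdsGT_zero
    refine tendsto_atTop_mono' _ ?_ h1
    filter_upwards [self_mem_nhdsWithin] with h hh
    have : c s₀ - V s₀ ≤ max (c s₀) (g h) - V s₀ := by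
      have := le_max_left (c s₀) (g h); linarith
    gcongr
    exact le_of_lt hh
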